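/- Let G be a chordal graph on n vertices and let p be a positive integer. Then any two p-colorings of G are Kempe equivalent up to at most n Kempe changes. -/

import Mathlib

/-!
A chordal graph has a simplicial vertex `v` (Dirac): for non-adjacent `x, y`, the neighbours of
`x` touching the component `C` of `y` in `G - N[x]` form a clique, so induction on the graph
induced by `C` and these neighbours yields a vertex of `C` that is simplicial in `G`.

Since the neighbourhood of `v` is a clique, the Kempe chains of `G - v` are exactly the traces of
those of `G`, so the at most `n - 1` Kempe changes turning `α` into `β` on `G - v` (induction on
`n`) lift to `G`. Every neighbour of `v` then already has its colour under `β`, and one last Kempe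
change, on the chain `{v}`, recolours `v`.
-/

open SimpleGraph

/-- A proper coloring of `G` with colors in `C`. -/
def IsProperColoring {V C : Type*} (G : SimpleGraph V) (α : V → C) : Prop :=
  ∀ ⦃u v : V⦄, G.Adj u v → α u ≠ α v

/-- `u` lies in the Kempe chain of `v` for the colors `a`, `b`, computed in the
subgraph of `G` induced by the vertex set `S`. -/
def InKempeChainOn {V C : Type*} (G : SimpleGraph V) (S : Set V) (α : V → C)
    (a b : C) (v u : V) : Prop :=
  Relation.ReflTransGen
    (fun x y => G.Adj x y ∧ x ∈ S ∧ y ∈ S ∧ (α x = a ∨ α x = b) ∧ (α y = a ∨ α y = b)) v u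

/-- `u` lies in the Kempe chain of `v` for the colors `a`, `b` in `G`. -/
def InKempeChain {V C : Type*} (G : SimpleGraph V) (α : V → C) (a b : C) (v u : V) : Prop :=
  InKempeChainOn G Set.univ α a b v u

/-- `β` is obtained from `α` by performing a single Kempe change: the colors `a` and `b`
are swapped on the Kempe chain containing `v`. -/
def KempeStep {V C : Type*} [DecidableEq C] (G : SimpleGraph V) (α β : V → C) : Prop :=
  ∃ (a b : C) (v : V), (α v = a ∨ α v = b) ∧
    (∀ u, InKempeChain G α a b v u → β u = Equiv.swap a b (α u)) ∧
    (∀ u, ¬InKempeChain G α a b v u → β u = α u)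

/-- `α` and `β` are Kempe equivalent up to `N` Kempe changes, all intermediate
colorings satisfying the predicate `P`. -/
def KempeEquivIn {V C : Type*} [DecidableEq C] (G : SimpleGraph V) (P : (V → C) → Prop)
    (N : ℕ) (α β : V → C) : Prop :=
  ∃ (m : ℕ) (f : ℕ → V → C), m ≤ N ∧ f 0 = α ∧ f m = β ∧
    (∀ i ≤ m, P (f i)) ∧ ∀ i < m, KempeStep G (f i) (f (i + 1))

/-- A graph is chordal if every cycle of length at least 4 has a chord. -/
def IsChordal {V : Type*} (G : SimpleGraph V) : Prop :=
  ∀ (v : V) (w : G.Walk v v), w.IsCycle → 4 ≤ w.length →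
    ∃ x y : V, x ∈ w.support ∧ y ∈ w.support ∧ G.Adj x y ∧ s(x, y) ∉ w.edges

def IsSimplicial {V : Type*} (G : SimpleGraph V) (v : V) : Prop :=
  G.IsClique (G.neighborSet v)

section Walks

variable {V : Type*} {G : SimpleGraph V}

theorem SimpleGraph.Walk.mk_mem_edges_of_length_eq_one {u w : V} :
    ∀ {p : G.Walk u w}, p.length = 1 → s(u, w) ∈ p.edges
  | .cons _ .nil, _ => by simp
  | .nil, h | .cons _ (.cons _ _), h => by simp at h

theorem SimpleGraph.Walk.mem_edges_of_minimal_of_mem_support_right {T : Set V}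
    {x u y w : V} {q : G.Walk x u} {r : G.Walk u y}
    (hmin : ∀ W : G.Walk x y, (∀ z ∈ W.support, z ∈ T) → (q.append r).length ≤ W.length)
    (hT : ∀ z ∈ (q.append r).support, z ∈ T) (hw : w ∈ r.support) (h : G.Adj u w) :
    s(u, w) ∈ (q.append r).edges := by
  obtain ⟨r₁, r₂, rfl⟩ := Walk.mem_support_iff_exists_append.mp hw
  have hshort := hmin (q.append (.cons h r₂)) fun z hz => hT z (by
    simp only [Walk.mem_support_append_iff, Walk.support_cons, List.mem_cons] at hz ⊢
    rcases hz with hz | rfl | hz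
    · exact .inl hz
    · exact .inl q.end_mem_support
    · exact .inr (.inr hz))
  simp only [Walk.length_append, Walk.length_cons] at hshort
  have hr₁ : r₁.length ≠ 0 := fun h0 => h.ne (Walk.eq_of_length_eq_zero h0)
  simp only [Walk.edges_append, List.mem_append]
  exact .inr (.inl (Walk.mk_mem_edges_of_length_eq_one (by omega)))

theorem SimpleGraph.Walk.mem_edges_of_minimalFor {T : Set V} {x y : V} {W : G.Walk x y}
    (hW : MinimalFor (fun W : G.Walk x y => ∀ z ∈ W.support, z ∈ T) Walk.length W)
    {u w : V} (hu : u ∈ W.support) (hw : w ∈ W.support) (h : G.Adj u w) :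
    s(u, w) ∈ W.edges := by
  obtain ⟨q, r, rfl⟩ := Walk.mem_support_iff_exists_append.mp hu
  rcases (Walk.mem_support_append_iff q r).mp hw with hw | hw
  -- `w` comes before `u`: reverse the walk to put it after
  · have hmin : ∀ W' : G.Walk y x, (∀ z ∈ W'.support, z ∈ T) →
        (r.reverse.append q.reverse).length ≤ W'.length := fun W' hW' => by
      simpa [← Walk.reverse_append] using hW.le (j := W'.reverse) (by simpa using hW')
    have := mem_edges_of_minimal_of_mem_support_right hmin
      (by simpa [← Walk.reverse_append] using hW.1) (by simpa using hw) h
    simpa [← Walk.reverse_append, or_comm] using this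
  · exact mem_edges_of_minimal_of_mem_support_right (fun _ => hW.le) hW.1 hw h

end Walks

section Chordal

variable {V : Type*} {G : SimpleGraph V}

theorem IsChordal.of_embedding {W : Type*} {H : SimpleGraph W} (f : H ↪g G) (hG : IsChordal G) :
    IsChordal H := by
  classical
  intro v w hw hlen
  obtain ⟨x, y, hx, hy, hxy, hnot⟩ :=
    hG (f v) (w.map f.toHom) (hw.map f.injective) (by rwa [Walk.length_map])
  rw [Walk.support_map, List.mem_map] at hx hy
  obtain ⟨x, hx, rfl⟩ := hx
  obtain ⟨y, hy, rfl⟩ := hy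
  refine ⟨x, y, hx, hy, f.map_adj_iff.mp hxy, fun hmem => hnot ?_⟩
  rw [Walk.edges_map]
  exact List.mem_map_of_mem (f := Sym2.map f.toHom) hmem

theorem IsChordal.induce (hG : IsChordal G) (s : Set V) : IsChordal (G.induce s) :=
  hG.of_embedding (Embedding.induce s)

/-- Otherwise `x` and a shortest such walk would form a chordless cycle of length at least 4. -/
theorem IsChordal.adj_of_walk_avoiding_closedNbhd (hG : IsChordal G) {x s₁ s₂ : V}
    (h₁ : G.Adj x s₁) (h₂ : G.Adj x s₂) (hne : s₁ ≠ s₂) (W : G.Walk s₁ s₂)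
    (hW : ∀ z ∈ W.support, z = s₁ ∨ z = s₂ ∨ (z ≠ x ∧ ¬G.Adj x z)) : G.Adj s₁ s₂ := by
  classical
  by_contra hn
  obtain ⟨P, hP⟩ := exists_minimalFor_of_wellFoundedLT
    (fun W : G.Walk s₁ s₂ => ∀ z ∈ W.support, z = s₁ ∨ z = s₂ ∨ (z ≠ x ∧ ¬G.Adj x z))
    Walk.length ⟨W, hW⟩
  have hPpath : P.IsPath := by
    rw [← P.bypass_eq_self_of_length_le_length_bypass
      (hP.le fun z hz => hP.1 z (P.support_bypass_subset_support hz))]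
    exact P.bypass_isPath
  have hxP : x ∉ P.support := fun hx => by
    rcases hP.1 x hx with rfl | rfl | ⟨hxx, -⟩
    exacts [h₁.ne rfl, h₂.ne rfl, hxx rfl]
  have hlen : 2 ≤ P.length := by
    have h0 : P.length ≠ 0 := fun h => hne (Walk.eq_of_length_eq_zero h)
    have h1 : P.length ≠ 1 := fun h => hn (Walk.adj_of_length_eq_one h)
    omega
  let Z : G.Walk s₂ s₂ := .cons h₂.symm (.cons h₁ P)
  have hZ : Z.IsCycle := by
    refine (Walk.cons_isCycle_iff _ _).mpr ⟨(Walk.cons_isPath_iff _ _).mpr ⟨hPpath, hxP⟩, ?_⟩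
    simp only [Walk.edges_cons, List.mem_cons, Sym2.eq_iff, not_or]
    exact ⟨⟨fun h => h₂.ne h.1.symm, fun h => hne h.1.symm⟩, fun h => hxP (P.snd_mem_support_of_mem_edges h)⟩
  have hZsupp : ∀ z ∈ Z.support, z = x ∨ z ∈ P.support := by
    simp only [Z, Walk.support_cons, List.mem_cons]
    rintro z (rfl | rfl | hz)
    exacts [.inr P.end_mem_support, .inl rfl, .inr hz]
  have hZedges : ∀ e ∈ P.edges, e ∈ Z.edges := fun e he => by
    simp [Z, Walk.edges_cons, he]
  have hchord_x : ∀ z ∈ P.support, G.Adj x z → s(x, z) ∈ Z.edges := fun z hz hxz => by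
    rcases hP.1 z hz with rfl | rfl | ⟨-, hz⟩
    · simp [Z, Walk.edges_cons]
    · simp [Z, Walk.edges_cons, Sym2.eq_swap]
    · exact absurd hxz hz
  obtain ⟨c, d, hc, hd, hcd, hnot⟩ := hG s₂ Z hZ (by simp [Z]; omega)
  rcases hZsupp c hc with rfl | hcP <;> rcases hZsupp d hd with rfl | hdP
  · exact hcd.ne rfl
  · exact hnot (hchord_x d hdP hcd)
  · exact hnot (Sym2.eq_swap ▸ hchord_x c hcP hcd.symm)
  · exact hnot (hZedges _ (Walk.mem_edges_of_minimalFor hP hcP hdP hcd))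

end Chordal

section Simplicial

variable {V : Type*} {G : SimpleGraph V}

theorem isSimplicial_of_forall_adj (hG : ∀ u w, u ≠ w → G.Adj u w) (v : V) : IsSimplicial G v :=
  fun p _ q _ hpq => hG p q hpq

theorem IsSimplicial.of_induce {U : Set V} {v : U} (hv : IsSimplicial (G.induce U) v)
    (hU : ∀ t, G.Adj v t → t ∈ U) : IsSimplicial G v :=
  fun p hp q hq hpq =>
    hv (x := ⟨p, hU p hp⟩) hp (y := ⟨q, hU q hq⟩) hq fun h => hpq (congrArg Subtype.val h)

theorem exists_isSimplicial_not_mem_of_isClique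
    (hG : ∀ x y, x ≠ y → ¬G.Adj x y → ∃ z, IsSimplicial G z ∧ z ≠ x ∧ ¬G.Adj x z)
    {K : Set V} (hK : G.IsClique K) {y : V} (hy : y ∉ K) : ∃ z ∉ K, IsSimplicial G z := by
  by_cases hcomplete : ∀ u w, u ≠ w → G.Adj u w
  · exact ⟨y, hy, isSimplicial_of_forall_adj hcomplete y⟩
  push Not at hcomplete
  obtain ⟨u, w, huw, hnuw⟩ := hcomplete
  obtain ⟨z₁, hz₁, hz₁u, hnz₁⟩ := hG u w huw hnuw
  obtain ⟨z₂, hz₂, hz₂z₁, hnz₂⟩ := hG z₁ u hz₁u fun h => hnz₁ h.symm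
  by_cases h₁ : z₁ ∈ K
  · exact ⟨z₂, fun h₂ => hnz₂ (hK h₁ h₂ hz₂z₁.symm), hz₂⟩
  · exact ⟨z₁, h₁, hz₁⟩

/-- `U` is the component `C` of `y` in `G - N[x]` together with the set `K` of neighbours of `x`
adjacent to `C`; chordality makes `K` a clique. -/
theorem IsChordal.exists_clique_separating (hG : IsChordal G) {x y : V} (hxy : x ≠ y)
    (hadj : ¬G.Adj x y) :
    ∃ U K : Set V, x ∉ U ∧ y ∈ U ∧ y ∉ K ∧ G.IsClique K ∧
      ∀ u ∈ U, u ∉ K → (u ≠ x ∧ ¬G.Adj x u) ∧ ∀ t, G.Adj u t → t ∈ U := by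
  set D : Set V := {z | z ≠ x ∧ ¬G.Adj x z}
  set C : Set V := {z | ∃ W : G.Walk y z, ∀ t ∈ W.support, t ∈ D}
  set K : Set V := {s | G.Adj x s ∧ ∃ c ∈ C, G.Adj s c}
  have hCD : ∀ c ∈ C, c ∈ D := fun c ⟨W, hW⟩ => hW c W.end_mem_support
  refine ⟨C ∪ K, K, ?_, .inl ⟨.nil, by simpa [D] using ⟨hxy.symm, hadj⟩⟩, fun h => hadj h.1,
    ?_, ?_⟩
  · rintro (hx | hx)
    exacts [(hCD x hx).1 rfl, hx.1.ne rfl]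
  · rintro s₁ ⟨hx₁, c₁, ⟨W₁, hW₁⟩, h₁⟩ s₂ ⟨hx₂, c₂, ⟨W₂, hW₂⟩, h₂⟩ hne
    refine hG.adj_of_walk_avoiding_closedNbhd hx₁ hx₂ hne
      (.cons h₁ ((W₁.reverse.append W₂).concat h₂.symm)) fun z hz => ?_
    simp only [Walk.support_cons, Walk.support_concat, List.mem_cons, List.mem_append,
      Walk.mem_support_append_iff, Walk.support_reverse, List.mem_reverse, List.not_mem_nil,
      or_false] at hz
    rcases hz with rfl | (hz | hz) | rfl
    exacts [.inl rfl, .inr (.inr (hW₁ z hz)), .inr (.inr (hW₂ z hz)), .inr (.inl rfl)]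
  · rintro u (⟨W, hW⟩ | hu) huK
    · refine ⟨hW u W.end_mem_support, fun t hut => ?_⟩
      by_cases ht : t ∈ D
      · refine .inl ⟨W.concat hut, fun z hz => ?_⟩
        rw [Walk.support_concat, List.mem_append, List.mem_singleton] at hz
        rcases hz with hz | rfl
        exacts [hW z hz, ht]
      · have htx : t ≠ x := by
          rintro rfl
          exact (hW u W.end_mem_support).2 hut.symm
        have hxt : G.Adj x t := by
          by_contra hxt
          exact ht ⟨htx, hxt⟩
        exact .inr ⟨hxt, u, ⟨W, hW⟩, hut.symm⟩
    · exact absurd hu huK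

theorem IsChordal.exists_isSimplicial_not_adj [Finite V] (hG : IsChordal G) {x y : V}
    (hxy : x ≠ y) (hadj : ¬G.Adj x y) : ∃ z, IsSimplicial G z ∧ z ≠ x ∧ ¬G.Adj x z := by
  induction hn : Nat.card V using Nat.strong_induction_on generalizing V with
  | _ n ih =>
  obtain ⟨U, K, hxU, hyU, hyK, hK, hUK⟩ := hG.exists_clique_separating hxy hadj
  have hind : ∀ a b : U, a ≠ b → ¬(G.induce U).Adj a b →
      ∃ z, IsSimplicial (G.induce U) z ∧ z ≠ a ∧ ¬(G.induce U).Adj a z :=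
    fun a b hab hnab => ih _ (hn ▸ Finite.card_subtype_lt hxU) (hG.induce U) hab hnab rfl
  obtain ⟨z, hzK, hz⟩ := exists_isSimplicial_not_mem_of_isClique hind (K := Subtype.val ⁻¹' K)
    (fun a ha b hb hab => hK ha hb (Subtype.val_injective.ne hab)) (y := ⟨y, hyU⟩) hyK
  obtain ⟨hzx, hzU⟩ := hUK z z.2 hzK
  exact ⟨z, hz.of_induce hzU, hzx⟩

theorem IsChordal.exists_isSimplicial [Finite V] [Nonempty V] (hG : IsChordal G) :
    ∃ v, IsSimplicial G v := by
  by_cases hcomplete : ∀ u w, u ≠ w → G.Adj u w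
  · exact ⟨Classical.arbitrary V, isSimplicial_of_forall_adj hcomplete _⟩
  push Not at hcomplete
  obtain ⟨x, y, hxy, hadj⟩ := hcomplete
  obtain ⟨z, hz, -⟩ := hG.exists_isSimplicial_not_adj hxy hadj
  exact ⟨z, hz⟩

end Simplicial

section Kempe

variable {V C : Type*} {G : SimpleGraph V} {γ : V → C} {a b : C}

theorem InKempeChainOn.color {S : Set V} {v u : V} (hv : γ v = a ∨ γ v = b)
    (h : InKempeChainOn G S γ a b v u) : γ u = a ∨ γ u = b := by
  rcases Relation.ReflTransGen.cases_tail h with rfl | ⟨_, _, hstep⟩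
  exacts [hv, hstep.2.2.2.2]

theorem InKempeChainOn.mono {S T : Set V} (hST : S ⊆ T) {v u : V}
    (h : InKempeChainOn G S γ a b v u) : InKempeChainOn G T γ a b v u :=
  Relation.ReflTransGen.mono (fun _ _ ⟨hxy, hx, hy, hcol⟩ => ⟨hxy, hST hx, hST hy, hcol⟩) _ _ h

theorem inKempeChain_induce_iff (S : Set V) (v u : S) :
    InKempeChain (G.induce S) (fun x => γ x) a b v u ↔ InKempeChainOn G S γ a b v u := by
  constructor
  · exact Relation.ReflTransGen.lift Subtype.val
      (fun x y ⟨hxy, _, _, hcol⟩ => ⟨hxy, x.2, y.2, hcol⟩) _ _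
  · intro h
    suffices ∀ (x : V) (hx : x ∈ S), InKempeChainOn G S γ a b x u →
        InKempeChain (G.induce S) (fun x => γ x) a b ⟨x, hx⟩ u from this v v.2 h
    intro x hx hxu
    induction hxu using Relation.ReflTransGen.head_induction_on with
    | refl => exact .refl
    | @head y z hstep _ ih =>
      have hyz : (G.induce S).Adj ⟨y, hx⟩ ⟨z, hstep.2.2.1⟩ := hstep.1
      exact .head ⟨hyz, trivial, trivial, hstep.2.2.2⟩ (ih hstep.2.2.1)

/-- A Kempe chain through a simplicial vertex `v` can bypass it, since the neighbourhood of `v`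
is a clique. -/
theorem InKempeChain.inKempeChainOn_compl_singleton {v u w : V} (hv : IsSimplicial G v)
    (hu : γ u = a ∨ γ u = b) (huv : u ≠ v) (h : InKempeChain G γ a b u w) (hwv : w ≠ v) :
    InKempeChainOn G {v}ᶜ γ a b u w := by
  suffices ∀ w, InKempeChain G γ a b u w → (w ≠ v → InKempeChainOn G {v}ᶜ γ a b u w) ∧
      (w = v → ∃ z, InKempeChainOn G {v}ᶜ γ a b u z ∧ G.Adj v z) from (this w h).1 hwv
  intro w h
  induction h with
  | refl => exact ⟨fun _ => .refl, fun h => absurd h huv⟩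
  | @tail w w' _ hstep ih =>
    obtain ⟨hww', -, -, hw, hw'⟩ := hstep
    refine ⟨fun hw'v => ?_, ?_⟩
    · by_cases hwv : w = v
      · obtain ⟨z, hz, hvz⟩ := ih.2 hwv
        subst hwv
        by_cases hzw' : z = w'
        · exact hzw' ▸ hz
        · exact hz.tail ⟨hv hvz hww' hzw', hvz.ne', hw'v, hz.color hu, hw'⟩
      · exact (ih.1 hwv).tail ⟨hww', hwv, hw'v, hw, hw'⟩
    · rintro rfl
      exact ⟨w, ih.1 hww'.ne, hww'.symm⟩

theorem IsProperColoring.kempeStep [DecidableEq C] {δ : V → C} (hγ : IsProperColoring G γ)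
    (h : KempeStep G γ δ) : IsProperColoring G δ := by
  obtain ⟨a, b, v, hv, hin, hout⟩ := h
  have hbdry : ∀ {x y : V}, G.Adj x y → InKempeChain G γ a b v x →
      ¬InKempeChain G γ a b v y → Equiv.swap a b (γ x) ≠ γ y := by
    intro x y hxy hx hy heq
    have hy' : ¬(γ y = a ∨ γ y = b) := fun hc => hy (hx.tail ⟨hxy, trivial, trivial, hx.color hv, hc⟩)
    rcases InKempeChainOn.color hv hx with h' | h' <;> rw [h'] at heq
    · exact hy' (.inr (by simpa using heq.symm))
    · exact hy' (.inl (by simpa using heq.symm))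
  intro x y hxy
  by_cases hx : InKempeChain G γ a b v x <;> by_cases hy : InKempeChain G γ a b v y
  · rw [hin x hx, hin y hy]
    exact fun h => hγ hxy ((Equiv.swap a b).injective h)
  · rw [hin x hx, hout y hy]
    exact hbdry hxy hx hy
  · rw [hout x hx, hin y hy]
    exact fun h => hbdry hxy.symm hy hx h.symm
  · rw [hout x hx, hout y hy]
    exact hγ hxy

theorem KempeStep.lift_of_isSimplicial [DecidableEq C] {v : V} (hv : IsSimplicial G v)
    {δ' : ({v}ᶜ : Set V) → C} (h : KempeStep (G.induce {v}ᶜ) (fun x => γ x) δ') :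
    ∃ δ, KempeStep G γ δ ∧ (fun x : ({v}ᶜ : Set V) => δ x) = δ' := by
  classical
  obtain ⟨a, b, u, hu, hin, hout⟩ := h
  have hchain : ∀ x : ({v}ᶜ : Set V),
      InKempeChain G γ a b u x ↔ InKempeChain (G.induce {v}ᶜ) (fun x => γ x) a b u x :=
    fun x => by
      rw [inKempeChain_induce_iff]
      exact ⟨fun h => h.inKempeChainOn_compl_singleton hv hu u.2 x.2,
        fun h => h.mono (Set.subset_univ _)⟩
  refine ⟨fun x => if InKempeChain G γ a b u x then Equiv.swap a b (γ x) else γ x,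
    ⟨a, b, u, hu, fun x hx => if_pos hx, fun x hx => if_neg hx⟩, funext fun x => ?_⟩
  by_cases hx : InKempeChain G γ a b u x
  · simp only [if_pos hx, hin x ((hchain x).mp hx)]
  · simp only [if_neg hx, hout x (mt (hchain x).mpr hx)]

theorem kempeStep_update [DecidableEq V] [DecidableEq C] {v : V} {c : C}
    (hc : ∀ w, G.Adj v w → γ w ≠ γ v ∧ γ w ≠ c) : KempeStep G γ (Function.update γ v c) := by
  have hchain : ∀ u, InKempeChain G γ (γ v) c v u → u = v := fun u h => by
    rcases Relation.ReflTransGen.cases_head h with rfl | ⟨w, hvw, -⟩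
    · rfl
    · exact (hvw.2.2.2.2.elim (hc w hvw.1).1 (hc w hvw.1).2).elim
  refine ⟨γ v, c, v, .inl rfl, fun u hu => ?_, fun u hu => ?_⟩
  · obtain rfl := hchain u hu
    simp
  · exact Function.update_of_ne (fun h => hu (by rw [h]; exact .refl)) _ _

end Kempe

section KempeEquiv

variable {V C : Type*} [DecidableEq C] {G : SimpleGraph V} {P : (V → C) → Prop}
  {N : ℕ} {α β γ : V → C}

theorem KempeEquivIn.refl (hα : P α) : KempeEquivIn G P 0 α α :=
  ⟨0, fun _ => α, le_rfl, rfl, rfl, fun _ _ => hα, fun _ h => absurd h (Nat.not_lt_zero _)⟩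

theorem KempeEquivIn.prop_right (h : KempeEquivIn G P N α β) : P β :=
  let ⟨m, _, _, _, hfm, hP, _⟩ := h
  hfm ▸ hP m le_rfl

theorem KempeEquivIn.mono {N' : ℕ} (h : KempeEquivIn G P N α β) (hN : N ≤ N') :
    KempeEquivIn G P N' α β :=
  let ⟨m, f, hm, hf⟩ := h
  ⟨m, f, hm.trans hN, hf⟩

theorem KempeEquivIn.tail (h : KempeEquivIn G P N α β) (hstep : KempeStep G β γ) (hγ : P γ) :
    KempeEquivIn G P (N + 1) α γ := by
  obtain ⟨m, f, hm, h0, hfm, hP, hf⟩ := h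
  refine ⟨m + 1, Function.update f (m + 1) γ, by omega, by simpa using h0, by simp,
    fun i hi => ?_, fun i hi => ?_⟩
  · rcases Nat.le_add_one_iff.mp hi with hi | rfl
    · rw [Function.update_of_ne (by omega)]
      exact hP i hi
    · simpa using hγ
  · rcases Nat.lt_succ_iff_lt_or_eq.mp hi with hi | rfl
    · rw [Function.update_of_ne (by omega), Function.update_of_ne (by omega)]
      exact hf i hi
    · rw [Function.update_of_ne (by omega), Function.update_self, hfm]
      exact hstep

end KempeEquiv

theorem KempeEquivIn.lift_of_isSimplicial {V C : Type*} [DecidableEq C] {G : SimpleGraph V}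
    {v : V} (hv : IsSimplicial G v) {N : ℕ} {α : V → C} {β' : ({v}ᶜ : Set V) → C}
    (h : KempeEquivIn (G.induce {v}ᶜ) (IsProperColoring (G.induce {v}ᶜ)) N (fun x => α x) β')
    (hα : IsProperColoring G α) :
    ∃ β, KempeEquivIn G (IsProperColoring G) N α β ∧ (fun x : ({v}ᶜ : Set V) => β x) = β' := by
  obtain ⟨m, f, hm, h0, hfm, -, hf⟩ := h
  suffices ∀ i ≤ m, ∃ β, KempeEquivIn G (IsProperColoring G) i α β ∧
      (fun x : ({v}ᶜ : Set V) => β x) = f i by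
    obtain ⟨β, hβ, hres⟩ := this m le_rfl
    exact ⟨β, hβ.mono hm, hres.trans hfm⟩
  intro i hi
  induction i with
  | zero => exact ⟨α, .refl hα, h0.symm⟩
  | succ i ih =>
    obtain ⟨β, hβ, hres⟩ := ih (by omega)
    obtain ⟨δ, hδ, hδres⟩ := (hres ▸ hf i hi).lift_of_isSimplicial hv
    exact ⟨δ, hβ.tail hδ (hβ.prop_right.kempeStep hδ), hδres⟩

theorem IsChordal.kempeEquivIn {V C : Type*} [Finite V] [DecidableEq C] {G : SimpleGraph V}
    (hG : IsChordal G) {α β : V → C} (hα : IsProperColoring G α) (hβ : IsProperColoring G β) :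
    KempeEquivIn G (IsProperColoring G) (Nat.card V) α β := by
  classical
  induction hn : Nat.card V generalizing V with
  | zero =>
    have := Finite.card_eq_zero_iff.mp hn
    exact Subsingleton.elim α β ▸ .refl hα
  | succ n ih =>
    have : Nonempty V := Nat.card_pos_iff.mp (by omega) |>.1
    obtain ⟨v, hv⟩ := hG.exists_isSimplicial
    have hcard : Nat.card ({v}ᶜ : Set V) = n := by
      have := Set.ncard_add_ncard_compl {v}
      rw [Set.ncard_singleton] at this
      rw [Nat.card_coe_set_eq]
      omega
    obtain ⟨γ, hγ, hres⟩ := (ih (hG.induce _) (α := fun x => α x) (β := fun x => β x)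
      (fun _ _ h => hα h) (fun _ _ h => hβ h) hcard).lift_of_isSimplicial hv hα
    have hβγ : Function.update γ v (β v) = β := by
      ext x
      by_cases hx : x = v
      · simp [hx]
      · rw [Function.update_of_ne hx]
        exact congrFun hres ⟨x, hx⟩
    have hstep : KempeStep G γ β := hβγ ▸ kempeStep_update fun w hvw =>
      ⟨hγ.prop_right hvw.symm, congrFun hres ⟨w, hvw.ne'⟩ ▸ hβ hvw.symm⟩
    exact hγ.tail hstep hβ

theorem statement_11_general (n p : ℕ) (G : SimpleGraph (Fin n)) (hG : IsChordal G)
    (α β : Fin n → Fin p) (hα : IsProperColoring G α) (hβ : IsProperColoring G β) :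
    KempeEquivIn G (IsProperColoring G) n α β := by
  simpa using hG.kempeEquivIn hα hβ

theorem statement_11 (n p : ℕ) (hp : 1 ≤ p) (G : SimpleGraph (Fin n)) (hG : IsChordal G)
    (α β : Fin n → Fin p) (hα : IsProperColoring G α) (hβ : IsProperColoring G β) :
    KempeEquivIn G (IsProperColoring G) n α β :=
  statement_11_general n p G hG α β hα hβ
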